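/- Let X₁, X₂, … be i.i.d. discrete random variables with joint probability mass function p_θ parameterized by θ ∈ Θ ⊆ ℝ, and let φ be a unimodal-likelihood estimator. Let E be an event determined by (X₁,…,X_r) with E ⊆ {φ(X₁,…,X_r) ≥ z}. Then Pr{E | θ} is non-decreasing with respect to θ ∈ Θ on {θ : θ ≤ z}. -/
import Mathlib

/-- Lemma 1(ii) (ULE_Basic, deterministic sample size): if for each observation `x` the
likelihood `θ ↦ p θ x` is non-decreasing for `θ ≤ φ(x)`, and the event `E` satisfies
`E ⊆ {x | φ(x) ≥ z}`, then `Pr{E | θ} = ∑_{x ∈ E} p θ x` is non-decreasing in `θ ∈ Θ`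
on `{θ : θ ≤ z}`. -/
theorem stmt_14 {V : Type*} (r : ℕ) (Θ : Set ℝ)
    (p : ℝ → (Fin r → V) → ENNReal) (hp : ∀ θ ∈ Θ, ∑' x : Fin r → V, p θ x = 1)
    (φ : (Fin r → V) → ℝ)
    (hULE : ∀ x : Fin r → V, ∀ θ₁ ∈ Θ, ∀ θ₂ ∈ Θ, θ₁ ≤ θ₂ → θ₂ ≤ φ x → p θ₁ x ≤ p θ₂ x)
    (z : ℝ) (E : Set (Fin r → V)) (hE : E ⊆ {x | z ≤ φ x}) :
    ∀ θ₁ ∈ Θ, ∀ θ₂ ∈ Θ, θ₁ ≤ θ₂ → θ₂ ≤ z →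
      ∑' x : E, p θ₁ x ≤ ∑' x : E, p θ₂ x := by
  intro θ₁ h1 θ₂ h2 h12 h2z
  exact ENNReal.tsum_le_tsum fun x =>
    hULE x θ₁ h1 θ₂ h2 h12 (h2z.trans (hE x.2))
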